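/- Let Ω ⊂ ℝ² be a bounded domain and let u, v ∈ L²(Ω) be conjugate harmonic functions satisfying the Cauchy–Riemann equations ∇u = ∇⊥v on Ω, with d_Ω ∇u ∈ L²(Ω). Then ‖d_Ω ∇u‖_{L²(Ω)} ≤ 2 ‖v‖_{L²(Ω)}. -/

import Mathlib

/-!
STATEMENT 2: For a bounded planar domain Ω and conjugate harmonic u, v ∈ L²(Ω)
(Cauchy–Riemann equations ∇u = ∇⊥v) with d_Ω ∇u ∈ L²(Ω), one has
‖d_Ω ∇u‖_{L²(Ω)} ≤ 2 ‖v‖_{L²(Ω)}.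
-/

open MeasureTheory

noncomputable section

/-- The plane ℝ². -/
abbrev E2 := EuclideanSpace ℝ (Fin 2)

/-- Partial derivative of `f` in the `i`-th coordinate direction. -/
noncomputable def pd (f : E2 → ℝ) (i : Fin 2) (x : E2) : ℝ :=
  fderiv ℝ f x (EuclideanSpace.single i 1)

/-- Distance from `x` to the boundary of `Ω`. -/
noncomputable def dB (Ω : Set E2) (x : E2) : ℝ :=
  Metric.infDist x (frontier Ω)

/-- Squared euclidean norm of the (classical) gradient of `f` at `x`. -/
noncomputable def gradSq (f : E2 → ℝ) (x : E2) : ℝ := ∑ i, pd f i x ^ 2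

/-- `u` and `v` are conjugate harmonic on `Ω`: both are differentiable on `Ω` and satisfy
the Cauchy–Riemann equations `∇u = ∇⊥v = (∂₂ v, -∂₁ v)` there. -/
def CRPair (Ω : Set E2) (u v : E2 → ℝ) : Prop :=
  ∀ x ∈ Ω, DifferentiableAt ℝ u x ∧ DifferentiableAt ℝ v x ∧
    pd u 0 x = pd v 1 x ∧ pd u 1 x = - pd v 0 x

/-!
The Cauchy–Riemann equations make `u + i v` holomorphic, so `v` is harmonic and `|∇u| = |∇v|`.
For a `C¹` cutoff `ψ` with compact support in `Ω` and `|∇ψ| ≤ 1`, integrating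
`div (ψ² v ∇v) = ψ² |∇v|² + 2 ψ v ∇ψ·∇v` over the plane and using `-2ab ≤ a²/2 + 2b²` gives
`∫ ψ² |∇v|² ≤ 4 ∫ v²`. Mollified truncations of `dist(·, Ωᶜ)` are such cutoffs, and they
converge to `d_Ω` on `Ω`, so Fatou's lemma yields `∫ d_Ω² |∇u|² ≤ 4 ∫ v²`.
-/

open Set Metric Filter Topology InnerProductSpace Laplacian Complex
open scoped Convolution NNReal ContDiff

section Calculus

variable {f g : E2 → ℝ} {x : E2}

lemma gradSq_nonneg : 0 ≤ gradSq f x :=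
  Finset.sum_nonneg fun _ _ => sq_nonneg _

lemma pd_mul (hf : DifferentiableAt ℝ f x) (hg : DifferentiableAt ℝ g x) (i : Fin 2) :
    pd (fun y => f y * g y) i x = pd f i x * g x + f x * pd g i x := by
  simp only [pd, fderiv_fun_mul hf hg, add_apply, smul_apply, smul_eq_mul]
  ring

lemma pd_neg (i : Fin 2) : pd (fun y => -f y) i x = -pd f i x := by
  simp [pd]

lemma Filter.EventuallyEq.pd_eq (h : f =ᶠ[𝓝 x] g) (i : Fin 2) : pd f i x = pd g i x := by
  rw [pd, pd, h.fderiv_eq]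

lemma pd_of_notMem_tsupport (hx : x ∉ tsupport f) (i : Fin 2) : pd f i x = 0 := by
  simp [pd, fderiv_of_notMem_tsupport ℝ hx]

lemma ContDiffOn.continuousOn_pd {Ω : Set E2} (hf : ContDiffOn ℝ 1 f Ω) (hΩ : IsOpen Ω)
    (i : Fin 2) : ContinuousOn (pd f i) Ω :=
  (hf.continuousOn_fderiv_of_isOpen hΩ le_rfl).clm_apply continuousOn_const

lemma ContDiffOn.contDiffOn_pd {Ω : Set E2} {n : WithTop ℕ∞} (hf : ContDiffOn ℝ (n + 1) f Ω)
    (hΩ : IsOpen Ω) (i : Fin 2) : ContDiffOn ℝ n (pd f i) Ω :=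
  (hf.fderiv_of_isOpen hΩ le_rfl).clm_apply contDiffOn_const

lemma pd_pd_eq_fderiv_fderiv (hf : ContDiffAt ℝ 2 f x) (i j : Fin 2) :
    pd (pd f i) j x =
      fderiv ℝ (fderiv ℝ f) x (EuclideanSpace.single j 1) (EuclideanSpace.single i 1) := by
  have hd : DifferentiableAt ℝ (fderiv ℝ f) x :=
    (hf.fderiv_right (m := 1) le_rfl).differentiableAt one_ne_zero
  rw [pd, show pd f i = fun y => fderiv ℝ f y (EuclideanSpace.single i 1) from rfl,
    fderiv_clm_apply hd (differentiableAt_const _)]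
  simp

lemma pd_pd_comm (hf : ContDiffAt ℝ 2 f x) (i j : Fin 2) :
    pd (pd f i) j x = pd (pd f j) i x := by
  rw [pd_pd_eq_fderiv_fderiv hf, pd_pd_eq_fderiv_fderiv hf]
  exact hf.isSymmSndFDerivAt (by simp) _ _

lemma laplacian_eq_sum_pd_pd (hf : ContDiffAt ℝ 2 f x) : Δ f x = ∑ i, pd (pd f i) i x := by
  simp [laplacian_eq_iteratedFDeriv_orthonormalBasis f (EuclideanSpace.basisFun (Fin 2) ℝ),
    iteratedFDeriv_two_apply, pd_pd_eq_fderiv_fderiv hf]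

lemma gradSq_eq_norm_fderiv_sq : gradSq f x = ‖fderiv ℝ f x‖ ^ 2 := by
  have hpd : ∀ i, pd f i x = (toDual ℝ E2).symm (fderiv ℝ f x) i := fun i => by
    rw [pd, ← toDual_symm_apply, real_inner_comm, EuclideanSpace.inner_single_left]
    simp
  rw [← (toDual ℝ E2).symm.norm_map, EuclideanSpace.norm_sq_eq, gradSq]
  simp [hpd]

lemma LipschitzWith.gradSq_le_one (hf : LipschitzWith 1 f) : gradSq f x ≤ 1 := by
  have h := norm_fderiv_le_of_lipschitz ℝ hf (x₀ := x)
  rw [NNReal.coe_one] at h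
  rw [gradSq_eq_norm_fderiv_sq]
  nlinarith [norm_nonneg (fderiv ℝ f x)]

lemma LipschitzWith.sum_pd_mul_pd_sq_le (hf : LipschitzWith 1 f) :
    (∑ i, pd f i x * pd g i x) ^ 2 ≤ gradSq g x := by
  have h := hf.gradSq_le_one (x := x)
  simp only [gradSq, Fin.sum_univ_two] at h ⊢
  nlinarith [sq_nonneg (pd f 0 x * pd g 1 x - pd f 1 x * pd g 0 x), sq_nonneg (pd g 0 x),
    sq_nonneg (pd g 1 x), mul_le_mul_of_nonneg_right h
      (add_nonneg (sq_nonneg (pd g 0 x)) (sq_nonneg (pd g 1 x)))]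

end Calculus

section ConjugateHarmonic

variable {Ω : Set E2} {u v : E2 → ℝ}

lemma CRPair.gradSq_eq (h : CRPair Ω u v) {x : E2} (hx : x ∈ Ω) : gradSq u x = gradSq v x := by
  obtain ⟨-, -, h₀, h₁⟩ := h x hx
  simp only [gradSq, Fin.sum_univ_two, h₀, h₁]
  ring

lemma orthonormalBasisOneI_repr_one :
    orthonormalBasisOneI.repr 1 = EuclideanSpace.single (0 : Fin 2) (1 : ℝ) := by
  ext i; fin_cases i <;> simp

lemma orthonormalBasisOneI_repr_I :
    orthonormalBasisOneI.repr I = EuclideanSpace.single (1 : Fin 2) (1 : ℝ) := by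
  ext i; fin_cases i <;> simp

lemma CRPair.differentiableAt_complex (h : CRPair Ω u v) {z : ℂ}
    (hz : orthonormalBasisOneI.repr z ∈ Ω) :
    DifferentiableAt ℂ (fun z => (u (orthonormalBasisOneI.repr z) : ℂ) +
      v (orthonormalBasisOneI.repr z) * I) z := by
  set e := orthonormalBasisOneI.repr
  obtain ⟨hu, hv, hcr₀, hcr₁⟩ := h _ hz
  have hF : HasFDerivAt (fun z => (u (e z) : ℂ) + v (e z) * I)
      (((fderiv ℝ u (e z)).comp (e : ℂ →L[ℝ] E2)).smulRight 1 +
        ((fderiv ℝ v (e z)).comp (e : ℂ →L[ℝ] E2)).smulRight I) z := by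
    have h := ((hu.hasFDerivAt.comp z e.toContinuousLinearEquiv.hasFDerivAt).smul_const
      (1 : ℂ)).fun_add ((hv.hasFDerivAt.comp z e.toContinuousLinearEquiv.hasFDerivAt).smul_const I)
    simp only [real_smul, mul_one] at h
    exact h
  refine differentiableAt_complex_iff_differentiableAt_real.2 ⟨hF.differentiableAt, ?_⟩
  have he₁ : e 1 = EuclideanSpace.single 0 1 := orthonormalBasisOneI_repr_one
  have heI : e I = EuclideanSpace.single 1 1 := orthonormalBasisOneI_repr_I
  simp only [pd] at hcr₀ hcr₁
  apply Complex.ext <;> simp [hF.fderiv, he₁, heI, hcr₁, ← hcr₀]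

lemma CRPair.contDiffAt (hΩ : IsOpen Ω) (h : CRPair Ω u v) {x : E2} (hx : x ∈ Ω)
    {n : WithTop ℕ∞} : ContDiffAt ℝ n u x ∧ ContDiffAt ℝ n v x := by
  set e := orthonormalBasisOneI.repr
  set F : ℂ → ℂ := fun z => (u (e z) : ℂ) + v (e z) * I
  have hopen : IsOpen (e ⁻¹' Ω) := hΩ.preimage e.continuous
  have hol : DifferentiableOn ℂ F (e ⁻¹' Ω) := fun z hz =>
    (h.differentiableAt_complex hz).differentiableWithinAt
  have hFx : ContDiffAt ℝ n F (e.symm x) :=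
    ((hol.contDiffOn hopen).contDiffAt (hopen.mem_nhds (by simpa using hx))).restrict_scalars ℝ
  have hF := hFx.comp x e.symm.toContinuousLinearEquiv.contDiff.contDiffAt
  constructor
  · convert reCLM.contDiff.contDiffAt.comp x hF using 1
    funext y; simp [F]
  · convert imCLM.contDiff.contDiffAt.comp x hF using 1
    funext y; simp [F]

lemma CRPair.harmonicOnNhd (hΩ : IsOpen Ω) (h : CRPair Ω u v) : HarmonicOnNhd v Ω := by
  intro x hx
  refine ⟨(h.contDiffAt hΩ hx).2, ?_⟩
  filter_upwards [hΩ.mem_nhds hx] with y hy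
  have hCR₀ : pd v 0 =ᶠ[𝓝 y] fun z => -pd u 1 z :=
    eventually_of_mem (hΩ.mem_nhds hy) fun z hz => by simp [(h z hz).2.2.2]
  have hCR₁ : pd v 1 =ᶠ[𝓝 y] pd u 0 :=
    eventually_of_mem (hΩ.mem_nhds hy) fun z hz => (h z hz).2.2.1.symm
  rw [Pi.zero_apply, laplacian_eq_sum_pd_pd (h.contDiffAt hΩ hy).2, Fin.sum_univ_two,
    hCR₀.pd_eq, hCR₁.pd_eq, pd_neg, pd_pd_comm (h.contDiffAt hΩ hy).1 1 0, neg_add_cancel]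

end ConjugateHarmonic

section Localization

lemma ContinuousOn.continuous_mul_of_tsupport_subset {X : Type*} [TopologicalSpace X]
    {Ω : Set X} {ψ g : X → ℝ} (hg : ContinuousOn g Ω) (hΩ : IsOpen Ω) (hψ : Continuous ψ)
    (hψΩ : tsupport ψ ⊆ Ω) : Continuous fun x => ψ x * g x :=
  continuous_of_tsupport fun _ hx =>
    hψ.continuousAt.mul (hg.continuousAt (hΩ.mem_nhds (hψΩ (tsupport_mul_subset_left hx))))

lemma ContDiffOn.contDiff_mul_of_tsupport_subset {E : Type*} [NormedAddCommGroup E]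
    [NormedSpace ℝ E] {Ω : Set E} {ψ g : E → ℝ} {n : WithTop ℕ∞} (hg : ContDiffOn ℝ n g Ω)
    (hΩ : IsOpen Ω) (hψ : ContDiff ℝ n ψ) (hψΩ : tsupport ψ ⊆ Ω) :
    ContDiff ℝ n fun x => ψ x * g x := by
  refine contDiff_iff_contDiffAt.2 fun x => ?_
  by_cases hx : x ∈ tsupport ψ
  · exact hψ.contDiffAt.mul (hg.contDiffAt (hΩ.mem_nhds (hψΩ hx)))
  · exact contDiffAt_const.congr_of_eventuallyEq
      (notMem_tsupport_iff_eventuallyEq.1 fun h => hx (tsupport_mul_subset_left h))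

lemma HasCompactSupport.integrable_fderiv_apply {E : Type*} [NormedAddCommGroup E]
    [NormedSpace ℝ E] [MeasurableSpace E] [OpensMeasurableSpace E] {μ : Measure E}
    [IsFiniteMeasureOnCompacts μ] {f : E → ℝ} (hfc : HasCompactSupport f) (hf : ContDiff ℝ 1 f)
    (w : E) : Integrable (fun x => fderiv ℝ f x w) μ :=
  ((hf.continuous_fderiv one_ne_zero).clm_apply continuous_const).integrable_of_hasCompactSupport
    (hfc.fderiv_apply ℝ w)

theorem HasCompactSupport.integral_fderiv_apply_eq_zero {E : Type*} [NormedAddCommGroup E]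
    [NormedSpace ℝ E] [FiniteDimensional ℝ E] [MeasurableSpace E] [BorelSpace E]
    {μ : Measure E} [μ.IsAddHaarMeasure] {f : E → ℝ} (hfc : HasCompactSupport f)
    (hf : ContDiff ℝ 1 f) (w : E) : ∫ x, fderiv ℝ f x w ∂μ = 0 := by
  simpa using integral_mul_fderiv_eq_neg_fderiv_mul_of_integrable (μ := μ)
    (f := fun _ => (1 : ℝ)) (g := f) (v := w) (by simp)
    (by simpa using hfc.integrable_fderiv_apply hf w)
    (by simpa using hf.continuous.integrable_of_hasCompactSupport hfc)
    (fun _ _ => differentiableAt_const _) (fun _ _ => hf.differentiable one_ne_zero _)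

end Localization

section Caccioppoli

variable {Ω : Set E2} {v ψ : E2 → ℝ}

lemma ContDiffOn.continuousOn_gradSq (hv : ContDiffOn ℝ 1 v Ω) (hΩ : IsOpen Ω) :
    ContinuousOn (gradSq v) Ω :=
  continuousOn_finsetSum _ fun i _ => (hv.continuousOn_pd hΩ i).pow 2

lemma ContDiffOn.integrable_sq_mul_gradSq (hv : ContDiffOn ℝ 1 v Ω) (hΩ : IsOpen Ω)
    (hψ : Continuous ψ) (hψc : HasCompactSupport ψ) (hψΩ : tsupport ψ ⊆ Ω) :
    Integrable fun x => ψ x ^ 2 * gradSq v x := by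
  have h : ContinuousOn (fun x => ψ x * gradSq v x) Ω :=
    hψ.continuousOn.mul (hv.continuousOn_gradSq hΩ)
  simpa only [sq, mul_assoc] using
    (h.continuous_mul_of_tsupport_subset hΩ hψ hψΩ).integrable_of_hasCompactSupport hψc.mul_right

/-- The divergence of `ψ² v ∇v`. -/
lemma sum_pd_sq_mul_pd {x : E2} (hv : ContDiffAt ℝ 2 v x) (hψ : DifferentiableAt ℝ ψ x) :
    ∑ i, pd (fun y => ψ y * (ψ y * (v y * pd v i y))) i x =
      ψ x ^ 2 * gradSq v x + ψ x * (2 * v x * ∑ i, pd ψ i x * pd v i x) +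
        ψ x ^ 2 * v x * Δ v x := by
  have hv₁ : DifferentiableAt ℝ v x := hv.differentiableAt (by simp)
  have hpd : ∀ i, DifferentiableAt ℝ (pd v i) x := fun i =>
    ((hv.fderiv_right (m := 1) le_rfl).clm_apply contDiffAt_const).differentiableAt one_ne_zero
  have hP : ∀ i, pd (fun y => ψ y * (ψ y * (v y * pd v i y))) i x =
      ψ x ^ 2 * pd v i x ^ 2 + ψ x * (2 * v x * (pd ψ i x * pd v i x)) +
        ψ x ^ 2 * v x * pd (pd v i) i x := fun i => by
    rw [pd_mul hψ (hψ.fun_mul (hv₁.fun_mul (hpd i))), pd_mul hψ (hv₁.fun_mul (hpd i)),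
      pd_mul hv₁ (hpd i)]
    ring
  simp only [hP, laplacian_eq_sum_pd_pd hv, gradSq, Fin.sum_univ_two]
  ring

theorem InnerProductSpace.HarmonicOnNhd.integral_sq_mul_gradSq_add_eq_zero
    (hv : HarmonicOnNhd v Ω) (hΩ : IsOpen Ω) (hψ : ContDiff ℝ 1 ψ) (hψc : HasCompactSupport ψ)
    (hψΩ : tsupport ψ ⊆ Ω) :
    ∫ x, (ψ x ^ 2 * gradSq v x + ψ x * (2 * v x * ∑ i, pd ψ i x * pd v i x)) = 0 := by
  set P := fun (i : Fin 2) y => ψ y * (ψ y * (v y * pd v i y))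
  have hP : ∀ i, ContDiff ℝ 1 (P i) := fun i =>
    (hψ.contDiffOn.mul (hv.contDiffOn.of_le one_le_two |>.mul
      (hv.contDiffOn.contDiffOn_pd hΩ i))).contDiff_mul_of_tsupport_subset hΩ hψ hψΩ
  have hPc : ∀ i, HasCompactSupport (P i) := fun i => hψc.mul_right
  have hdiv : ∀ x, ψ x ^ 2 * gradSq v x + ψ x * (2 * v x * ∑ i, pd ψ i x * pd v i x) =
      ∑ i, pd (P i) i x := by
    intro x
    by_cases hx : x ∈ Ω
    · rw [sum_pd_sq_mul_pd (hv x hx).1 (hψ.differentiable one_ne_zero x),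
        (hv x hx).2.self_of_nhds, Pi.zero_apply, mul_zero, add_zero]
    · have hψx : x ∉ tsupport ψ := fun h => hx (hψΩ h)
      have hPx : ∀ i, pd (P i) i x = 0 := fun i =>
        pd_of_notMem_tsupport (fun h => hψx (tsupport_mul_subset_left h)) i
      simp [hPx, image_eq_zero_of_notMem_tsupport hψx]
  simp_rw [hdiv]
  rw [integral_finsetSum (f := fun i x => pd (P i) i x) _ fun i _ =>
    (hPc i).integrable_fderiv_apply (hP i) _]
  exact Finset.sum_eq_zero fun i _ => (hPc i).integral_fderiv_apply_eq_zero (hP i) _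

theorem InnerProductSpace.HarmonicOnNhd.setIntegral_sq_mul_gradSq_le (hv : HarmonicOnNhd v Ω)
    (hΩ : IsOpen Ω) (hv2 : IntegrableOn (fun x => v x ^ 2) Ω) (hψ : ContDiff ℝ 1 ψ)
    (hψc : HasCompactSupport ψ) (hψΩ : tsupport ψ ⊆ Ω) (hψL : LipschitzWith 1 ψ) :
    ∫ x in Ω, ψ x ^ 2 * gradSq v x ≤ 4 * ∫ x in Ω, v x ^ 2 := by
  set A := fun x => ψ x ^ 2 * gradSq v x
  set B := fun x => ψ x * (2 * v x * ∑ i, pd ψ i x * pd v i x)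
  have hv₁ : ContDiffOn ℝ 1 v Ω := hv.contDiffOn.of_le one_le_two
  have hA : IntegrableOn A Ω :=
    (hv₁.integrable_sq_mul_gradSq hΩ hψ.continuous hψc hψΩ).integrableOn
  have hB : IntegrableOn B Ω := by
    refine ContinuousOn.continuous_mul_of_tsupport_subset ?_ hΩ hψ.continuous hψΩ
      |>.integrable_of_hasCompactSupport hψc.mul_right |>.integrableOn
    exact (continuousOn_const.mul hv₁.continuousOn).mul (continuousOn_finsetSum _ fun i _ =>
      ((hψ.continuous_fderiv one_ne_zero).clm_apply continuous_const).continuousOn.mul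
        (hv₁.continuousOn_pd hΩ i))
  have hAB : ∫ x in Ω, A x = -∫ x in Ω, B x := by
    rw [eq_neg_iff_add_eq_zero, ← integral_add hA hB, ← hv.integral_sq_mul_gradSq_add_eq_zero
      hΩ hψ hψc hψΩ, setIntegral_eq_integral_of_forall_compl_eq_zero fun x hx => ?_]
    simp [A, B, image_eq_zero_of_notMem_tsupport fun h => hx (hψΩ h)]
  have hpt : ∀ x, -B x ≤ A x / 2 + 2 * v x ^ 2 := fun x => by
    have h := hψL.sum_pd_mul_pd_sq_le (g := v) (x := x)
    nlinarith [sq_nonneg (ψ x * (∑ i, pd ψ i x * pd v i x) / 2 + v x),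
      mul_le_mul_of_nonneg_left h (sq_nonneg (ψ x))]
  have hle : ∫ x in Ω, A x ≤ (∫ x in Ω, A x) / 2 + 2 * ∫ x in Ω, v x ^ 2 := calc
    ∫ x in Ω, A x = ∫ x in Ω, -B x := by rw [hAB, integral_neg]
    _ ≤ ∫ x in Ω, (A x / 2 + 2 * v x ^ 2) :=
      integral_mono hB.neg ((hA.div_const 2).add (hv2.const_mul 2)) hpt
    _ = (∫ x in Ω, A x) / 2 + 2 * ∫ x in Ω, v x ^ 2 := by
      rw [integral_add (hA.div_const 2) (hv2.const_mul 2), integral_div, integral_const_mul]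
  linarith

end Caccioppoli

section Mollification

open ContinuousLinearMap (lsmul lsmul_apply)

variable {E : Type*} [NormedAddCommGroup E] [NormedSpace ℝ E] [FiniteDimensional ℝ E]

lemma ContDiffBump.lipschitzWith_normed_convolution [MeasurableSpace E] [BorelSpace E]
    {μ : Measure E} [μ.IsAddHaarMeasure] {c : E} (φ : ContDiffBump c) {K : ℝ≥0} {f : E → ℝ}
    (hf : LipschitzWith K f) : LipschitzWith K (φ.normed μ ⋆[lsmul ℝ ℝ, μ] f) := by
  have hint : ∀ x, Integrable (fun t => φ.normed μ t • f (x - t)) μ := fun x =>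
    (φ.continuous_normed.smul (hf.continuous.comp (continuous_const.sub continuous_id)))
      |>.integrable_of_hasCompactSupport φ.hasCompactSupport_normed.smul_right
  refine LipschitzWith.of_dist_le_mul fun x y => ?_
  simp only [dist_eq_norm, convolution_def, lsmul_apply]
  rw [← integral_sub (hint x) (hint y)]
  calc ‖∫ t, (φ.normed μ t • f (x - t) - φ.normed μ t • f (y - t)) ∂μ‖
      ≤ ∫ t, φ.normed μ t * (K * ‖x - y‖) ∂μ := by
        refine norm_integral_le_of_norm_le (φ.integrable_normed.mul_const _)
          (ae_of_all _ fun t => ?_)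
        rw [← smul_sub, norm_smul, Real.norm_of_nonneg (φ.nonneg_normed t)]
        refine mul_le_mul_of_nonneg_left ?_ (φ.nonneg_normed t)
        simpa [dist_eq_norm] using hf.dist_le_mul (x - t) (y - t)
    _ = K * ‖x - y‖ := by rw [integral_mul_const, φ.integral_normed, one_mul]

theorem LipschitzWith.exists_contDiff_dist_le {K : ℝ≥0} {f : E → ℝ} (hf : LipschitzWith K f)
    {ε : ℝ} (hε : 0 < ε) :
    ∃ g : E → ℝ, ContDiff ℝ ∞ g ∧ LipschitzWith K g ∧ (∀ x, dist (g x) (f x) ≤ K * ε) ∧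
      Function.support g ⊆ thickening ε (Function.support f) := by
  borelize E
  let φ : ContDiffBump (0 : E) := ⟨ε / 2, ε, half_pos hε, half_lt_self hε⟩
  let μ : Measure E := Measure.addHaar
  refine ⟨φ.normed μ ⋆[lsmul ℝ ℝ, μ] f, ?_, φ.lipschitzWith_normed_convolution hf,
    fun x => ?_, ?_⟩
  · exact φ.hasCompactSupport_normed.contDiff_convolution_left _ φ.contDiff_normed
      hf.continuous.locallyIntegrable
  · refine φ.dist_normed_convolution_le hf.continuous.aestronglyMeasurable fun y hy => ?_
    exact (hf.dist_le_mul y x).trans (mul_le_mul_of_nonneg_left (mem_ball.1 hy).le K.2)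
  · rw [← ball_add_zero, ← φ.support_normed_eq (μ := μ)]
    exact support_convolution_subset _

end Mollification

section DistanceToBoundary

variable {E : Type*} [NormedAddCommGroup E] [NormedSpace ℝ E] [FiniteDimensional ℝ E]

lemma IsOpen.infDist_frontier_eq_infDist_compl {Ω : Set E} (hΩ : IsOpen Ω) {x : E} (hx : x ∈ Ω) :
    infDist x (frontier Ω) = infDist x Ωᶜ := by
  rcases eq_or_ne Ω univ with rfl | hne
  · simp
  obtain ⟨y, hy, hxy⟩ := exists_mem_frontier_infDist_compl_eq_dist hx hne
  refine le_antisymm (hxy ▸ infDist_le_dist_of_mem hy) ?_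
  exact infDist_le_infDist_of_subset (hΩ.frontier_eq ▸ sdiff_subset_compl _ _) ⟨y, hy⟩

theorem Bornology.IsBounded.exists_contDiff_dist_infDist_compl_le {Ω : Set E} (hΩ : IsBounded Ω)
    {ε : ℝ} (hε : 0 < ε) :
    ∃ ψ : E → ℝ, ContDiff ℝ ∞ ψ ∧ HasCompactSupport ψ ∧ tsupport ψ ⊆ Ω ∧ LipschitzWith 1 ψ ∧
      ∀ x, dist (ψ x) (infDist x Ωᶜ) ≤ ε := by
  have hd : LipschitzWith 1 fun x => infDist x Ωᶜ := lipschitz_infDist_pt Ωᶜ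
  have hf : LipschitzWith 1 fun x => max (infDist x Ωᶜ - ε / 2) 0 :=
    by simpa using (hd.sub (LipschitzWith.const (ε / 2))).max_const 0
  -- Truncating at height `ε / 2` and mollifying at scale `ε / 4` keeps `ψ` supported in `S`.
  obtain ⟨ψ, hψ, hψL, hψf, hψs⟩ := hf.exists_contDiff_dist_le (half_pos (half_pos hε))
  set S := {x | ε / 4 ≤ infDist x Ωᶜ}
  have hSΩ : S ⊆ Ω := fun x (hx : ε / 4 ≤ _) => by
    by_contra h
    linarith [infDist_zero_of_mem (show x ∈ Ωᶜ from h)]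
  have hS : IsClosed S := isClosed_le continuous_const hd.continuous
  have hψS : tsupport ψ ⊆ S := by
    refine closure_minimal (hψs.trans fun x hx => ?_) hS
    obtain ⟨y, hy, hxy⟩ := mem_thickening_iff.1 hx
    have hy' : ε / 2 < infDist y Ωᶜ := by
      by_contra! h
      exact hy (max_eq_right (by linarith))
    show ε / 4 ≤ infDist x Ωᶜ
    linarith [infDist_le_infDist_add_dist (x := y) (y := x) (s := Ωᶜ), dist_comm x y]
  refine ⟨ψ, hψ, ?_, hψS.trans hSΩ, hψL, fun x => ?_⟩
  · exact (isCompact_of_isClosed_isBounded hS (hΩ.subset hSΩ)).of_isClosed_subset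
      (isClosed_tsupport ψ) hψS
  · have hfd : dist (max (infDist x Ωᶜ - ε / 2) 0) (infDist x Ωᶜ) ≤ ε / 2 := calc
      _ = |max (infDist x Ωᶜ - ε / 2) 0 - max (infDist x Ωᶜ) 0| := by
        rw [Real.dist_eq, max_eq_left infDist_nonneg]
      _ ≤ |infDist x Ωᶜ - ε / 2 - infDist x Ωᶜ| := abs_max_sub_max_le_abs _ _ _
      _ = ε / 2 := by rw [sub_sub_cancel_left, abs_neg, abs_of_pos (half_pos hε)]
    have hψx := hψf x
    rw [NNReal.coe_one, one_mul] at hψx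
    linarith [dist_triangle (ψ x) (max (infDist x Ωᶜ - ε / 2) 0) (infDist x Ωᶜ)]

end DistanceToBoundary

theorem MeasureTheory.integral_le_of_tendsto_of_forall_integral_le {α : Type*}
    [MeasurableSpace α] {μ : Measure α} {F : ℕ → α → ℝ} {f : α → ℝ} {C : ℝ}
    (hF : ∀ n, Integrable (F n) μ) (hF₀ : ∀ n, 0 ≤ᵐ[μ] F n)
    (hlim : ∀ᵐ x ∂μ, Tendsto (fun n => F n x) atTop (𝓝 (f x)))
    (hC : ∀ n, ∫ x, F n x ∂μ ≤ C) : ∫ x, f x ∂μ ≤ C := by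
  have hf₀ : 0 ≤ᵐ[μ] f := by
    filter_upwards [hlim, ae_all_iff.2 hF₀] with x hx hx₀
    exact ge_of_tendsto' hx hx₀
  have hC₀ : 0 ≤ C := (integral_nonneg_of_ae (hF₀ 0)).trans (hC 0)
  rw [integral_eq_lintegral_of_nonneg_ae hf₀
    (aestronglyMeasurable_of_tendsto_ae atTop (fun n => (hF n).1) hlim)]
  refine ENNReal.toReal_le_of_le_ofReal hC₀ ?_
  calc ∫⁻ x, ENNReal.ofReal (f x) ∂μ
      = ∫⁻ x, liminf (fun n => ENNReal.ofReal (F n x)) atTop ∂μ := by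
        refine lintegral_congr_ae ?_
        filter_upwards [hlim] with x hx
        exact ((ENNReal.continuous_ofReal.tendsto _).comp hx).liminf_eq.symm
    _ ≤ liminf (fun n => ∫⁻ x, ENNReal.ofReal (F n x) ∂μ) atTop :=
        lintegral_liminf_le' fun n => (hF n).1.aemeasurable.ennreal_ofReal
    _ ≤ ENNReal.ofReal C := by
        refine liminf_le_of_frequently_le' (Frequently.of_forall fun n => ?_)
        rw [← ofReal_integral_eq_lintegral_ofReal (hF n) (hF₀ n)]
        exact ENNReal.ofReal_le_ofReal (hC n)

theorem distGrad_le_two_conjugate_general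
    (Ω : Set E2) (hopen : IsOpen Ω)
    (hbdd : Bornology.IsBounded Ω)
    (u v : E2 → ℝ) (huv : CRPair Ω u v)
    (hv2 : IntegrableOn (fun x => v x ^ 2) Ω) :
    Real.sqrt (∫ x in Ω, dB Ω x ^ 2 * gradSq u x) ≤
      2 * Real.sqrt (∫ x in Ω, v x ^ 2) := by
  have hv := huv.harmonicOnNhd hopen
  choose ψ hψ hψc hψΩ hψL hψd using fun k : ℕ =>
    hbdd.exists_contDiff_dist_infDist_compl_le (Nat.one_div_pos_of_nat (n := k))
  have hψ₁ : ∀ k, ContDiff ℝ 1 (ψ k) := fun k => (hψ k).of_le (by simp)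
  have hlim : ∀ x ∈ Ω, Tendsto (fun k => ψ k x ^ 2 * gradSq v x) atTop
      (𝓝 (dB Ω x ^ 2 * gradSq u x)) := fun x hx => by
    rw [huv.gradSq_eq hx, dB, hopen.infDist_frontier_eq_infDist_compl hx]
    refine ((tendsto_iff_dist_tendsto_zero.2 ?_).pow 2).mul_const _
    exact squeeze_zero (fun _ => dist_nonneg) (fun k => hψd k x)
      tendsto_one_div_add_atTop_nhds_zero_nat
  have hle : ∫ x in Ω, dB Ω x ^ 2 * gradSq u x ≤ 4 * ∫ x in Ω, v x ^ 2 :=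
    integral_le_of_tendsto_of_forall_integral_le
      (fun k => ((hv.contDiffOn.of_le one_le_two).integrable_sq_mul_gradSq hopen
        (hψ k).continuous (hψc k) (hψΩ k)).integrableOn)
      (fun k => ae_of_all _ fun x => mul_nonneg (sq_nonneg _) gradSq_nonneg)
      ((ae_restrict_iff' hopen.measurableSet).2 (ae_of_all _ hlim))
      (fun k => hv.setIntegral_sq_mul_gradSq_le hopen hv2 (hψ₁ k) (hψc k) (hψΩ k) (hψL k))
  calc Real.sqrt (∫ x in Ω, dB Ω x ^ 2 * gradSq u x)
      ≤ Real.sqrt (2 ^ 2 * ∫ x in Ω, v x ^ 2) := Real.sqrt_le_sqrt (by linarith)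
    _ = 2 * Real.sqrt (∫ x in Ω, v x ^ 2) := by
        rw [Real.sqrt_mul (by positivity), Real.sqrt_sq zero_le_two]

/-- For a bounded planar domain `Ω` and square integrable conjugate
harmonic functions `u, v` with `d_Ω ∇u ∈ L²(Ω)`, we have `‖d_Ω ∇u‖ ≤ 2 ‖v‖`. -/
theorem distGrad_le_two_conjugate
    (Ω : Set E2) (hopen : IsOpen Ω) (hconn : IsConnected Ω)
    (hbdd : Bornology.IsBounded Ω)
    (u v : E2 → ℝ) (huv : CRPair Ω u v)
    (hu2 : IntegrableOn (fun x => u x ^ 2) Ω)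
    (hv2 : IntegrableOn (fun x => v x ^ 2) Ω)
    (hdu : IntegrableOn (fun x => dB Ω x ^ 2 * gradSq u x) Ω) :
    Real.sqrt (∫ x in Ω, dB Ω x ^ 2 * gradSq u x) ≤
      2 * Real.sqrt (∫ x in Ω, v x ^ 2) :=
  distGrad_le_two_conjugate_general Ω hopen hbdd u v huv hv2
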